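/- Summability of squared gradient norms for gradient descent on the exponential loss: if the fixed step size satisfies 0 < η < 1/L(w(0)), then for every t ≥ 0, Σ_{i=0}^{t} ‖∇L(w(i))‖² ≤ (L(w(0)) − L(w(t+1))) / (η(1 − (η/2)L(w(0)))); in particular Σ_{i=0}^{∞} ‖∇L(w(i))‖² ≤ L(w(0)) / (η(1 − (η/2)L(w(0)))) < ∞. -/

import Mathlib

open scoped RealInnerProductSpace BigOperators
open Filter

/-- The exponential loss `L(w) = ∑ₙ exp(-⟨w, xₙ⟩)`. -/
noncomputable def expLoss {d N : ℕ} (x : Fin N → EuclideanSpace ℝ (Fin d))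
    (w : EuclideanSpace ℝ (Fin d)) : ℝ :=
  ∑ n, Real.exp (-⟪w, x n⟫)

/-- The gradient of the exponential loss, `∇L(w) = -∑ₙ exp(-⟨w, xₙ⟩) xₙ`. -/
noncomputable def expLossGrad {d N : ℕ} (x : Fin N → EuclideanSpace ℝ (Fin d))
    (w : EuclideanSpace ℝ (Fin d)) : EuclideanSpace ℝ (Fin d) :=
  -∑ n, Real.exp (-⟪w, x n⟫) • x n

/-!
Along the segment `s ↦ w - s η ∇L(w)`, `s ∈ [0, 1]`, the second derivative of the loss is
`∑ₙ e^{-⟨·, xₙ⟩} ⟨xₙ, η∇L(w)⟩² ≤ η²‖∇L(w)‖² L`, and by convexity `L` on the segment is at most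
the larger of its endpoint values. A second-order Taylor bound then gives
`L⁺ ≤ L - η‖∇L‖² + (η²/2)‖∇L‖² max(L, L⁺)`; since `‖∇L‖ ≤ L` and `ηL < 1`, this rules out
`L⁺ > L` and yields `L⁺ ≤ L - η(1 - (η/2)L)‖∇L‖²`. So the loss decreases along the iterates,
each step by at least `η(1 - (η/2)L(w(0)))‖∇L(w(t))‖²`, and the bounds follow by telescoping.
-/

open Set

lemma le_add_deriv_mul_add_of_deriv2_le {f f' f'' : ℝ → ℝ} {a b C : ℝ} (hab : a ≤ b)
    (hf : ∀ s ∈ Icc a b, HasDerivAt f (f' s) s) (hf' : ∀ s ∈ Icc a b, HasDerivAt f' (f'' s) s)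
    (hC : ∀ s ∈ Icc a b, f'' s ≤ C) :
    f b ≤ f a + f' a * (b - a) + C / 2 * (b - a) ^ 2 := by
  rcases hab.eq_or_lt with rfl | hab
  · simp
  set g : ℝ → ℝ := fun s => f s - C / 2 * (s - a) ^ 2
  have hg : ∀ s ∈ Icc a b, HasDerivAt g (f' s - C * (s - a)) s := fun s hs => by
    have hsq := (((hasDerivAt_id' s).sub_const a).pow 2).const_mul (C / 2)
    refine ((hf s hs).sub hsq).congr_deriv ?_
    ring
  have hg' : ∀ s ∈ Icc a b, HasDerivAt (fun s => f' s - C * (s - a)) (f'' s - C) s := fun s hs =>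
    ((hf' s hs).sub (((hasDerivAt_id' s).sub_const a).const_mul C)).congr_deriv (by ring)
  have hconc : ConcaveOn ℝ (Icc a b) g := by
    refine concaveOn_of_hasDerivWithinAt2_nonpos (f' := fun s => f' s - C * (s - a))
      (f'' := fun s => f'' s - C) (convex_Icc a b)
      (fun s hs => (hg s hs).continuousAt.continuousWithinAt) (fun s hs => ?_) (fun s hs => ?_)
      (fun s hs => ?_) <;> rw [interior_Icc] at hs
    · exact (hg s (Ioo_subset_Icc_self hs)).hasDerivWithinAt
    · exact (hg' s (Ioo_subset_Icc_self hs)).hasDerivWithinAt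
    · linarith [hC s (Ioo_subset_Icc_self hs)]
  have hslope := hconc.slope_le_of_hasDerivAt (left_mem_Icc.2 hab.le) (right_mem_Icc.2 hab.le) hab
    (hg a (left_mem_Icc.2 hab.le))
  rw [slope_def_field, div_le_iff₀ (sub_pos.2 hab)] at hslope
  simp only [g, sub_self, zero_pow two_ne_zero, mul_zero, sub_zero] at hslope
  linarith

lemma le_sub_mul_of_le_add_max {A B G η : ℝ} (hη : 0 ≤ η) (hηA : η * A < 1) (hA : 0 ≤ A)
    (hG₀ : 0 ≤ G) (hG : G ≤ A ^ 2) (hB : B ≤ A - η * G + η ^ 2 * G / 2 * max A B) :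
    B ≤ A - η * (1 - η / 2 * A) * G := by
  rcases le_total B A with hBA | hAB
  · rw [max_eq_left hBA] at hB
    linarith
  rw [max_eq_right hAB] at hB
  have hηG : η ^ 2 * G < 1 := by nlinarith [mul_nonneg hη hA]
  -- `hB` now reads `B * (1 - η²G/2) ≤ A - ηG`, and `1 - η²G/2 > 0`.
  have key : A - η * G ≤ (A - η * (1 - η / 2 * A) * G) * (1 - η ^ 2 * G / 2) := by
    nlinarith [mul_nonneg (mul_nonneg (pow_nonneg hη 3) (mul_nonneg hG₀ hG₀))
      (by linarith : 0 ≤ 2 - η * A)]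
  exact le_of_mul_le_mul_right (by linarith) (by linarith : 0 < 1 - η ^ 2 * G / 2)

lemma sum_range_le_div_of_mul_le_sub {a u : ℕ → ℝ} {c : ℝ} (hc : 0 < c)
    (h : ∀ t, c * a t ≤ u t - u (t + 1)) (n : ℕ) :
    ∑ i ∈ Finset.range n, a i ≤ (u 0 - u n) / c := by
  rw [le_div_iff₀ hc, Finset.sum_mul, ← Finset.sum_range_sub']
  exact Finset.sum_le_sum fun t _ => by rw [mul_comm]; exact h t

section ExpLoss

variable {d N : ℕ} (x : Fin N → EuclideanSpace ℝ (Fin d))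

lemma expLoss_nonneg (w : EuclideanSpace ℝ (Fin d)) : 0 ≤ expLoss x w :=
  Finset.sum_nonneg fun _ _ => (Real.exp_pos _).le

lemma hasDerivAt_exp_neg_inner_line (w v y : EuclideanSpace ℝ (Fin d)) (s : ℝ) :
    HasDerivAt (fun s : ℝ => Real.exp (-⟪w + s • v, y⟫))
      (-(Real.exp (-⟪w + s • v, y⟫) * ⟪y, v⟫)) s := by
  have e : ∀ t : ℝ, -⟪w + t • v, y⟫ = -⟪w, y⟫ - t * ⟪y, v⟫ := fun t => by
    rw [inner_add_left, real_inner_smul_left, real_inner_comm v y]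
    ring
  simp only [e]
  refine (((hasDerivAt_id' s).mul_const ⟪y, v⟫).const_sub (-⟪w, y⟫)).exp.congr_deriv ?_
  ring

lemma hasDerivAt_expLoss_line (w v : EuclideanSpace ℝ (Fin d)) (s : ℝ) :
    HasDerivAt (fun s : ℝ => expLoss x (w + s • v)) ⟪expLossGrad x (w + s • v), v⟫ s := by
  simp only [expLoss, expLossGrad, inner_neg_left, sum_inner, real_inner_smul_left,
    ← Finset.sum_neg_distrib]
  exact HasDerivAt.fun_sum fun n _ => hasDerivAt_exp_neg_inner_line w v (x n) s

lemma hasDerivAt_inner_expLossGrad_line (w v : EuclideanSpace ℝ (Fin d)) (s : ℝ) :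
    HasDerivAt (fun s : ℝ => ⟪expLossGrad x (w + s • v), v⟫)
      (∑ n, Real.exp (-⟪w + s • v, x n⟫) * ⟪x n, v⟫ ^ 2) s := by
  simp only [expLossGrad, inner_neg_left, sum_inner, real_inner_smul_left,
    ← Finset.sum_neg_distrib]
  refine HasDerivAt.fun_sum fun n _ => ?_
  refine ((hasDerivAt_exp_neg_inner_line w v (x n) s).mul_const ⟪x n, v⟫).fun_neg.congr_deriv ?_
  ring

lemma sum_exp_mul_inner_sq_le (hx : ∀ n, ‖x n‖ ≤ 1) (u v : EuclideanSpace ℝ (Fin d)) :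
    ∑ n, Real.exp (-⟪u, x n⟫) * ⟪x n, v⟫ ^ 2 ≤ ‖v‖ ^ 2 * expLoss x u := by
  rw [expLoss, Finset.mul_sum]
  refine Finset.sum_le_sum fun n _ => ?_
  have h : ⟪x n, v⟫ ^ 2 ≤ ‖v‖ ^ 2 := by
    rw [← sq_abs]
    refine pow_le_pow_left₀ (abs_nonneg _) ?_ 2
    calc |⟪x n, v⟫| ≤ ‖x n‖ * ‖v‖ := abs_real_inner_le_norm _ _
      _ ≤ ‖v‖ := mul_le_of_le_one_left (norm_nonneg _) (hx n)
  rw [mul_comm]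
  exact mul_le_mul_of_nonneg_right h (Real.exp_pos _).le

lemma expLoss_line_le_max (w v : EuclideanSpace ℝ (Fin d)) {s : ℝ} (hs : s ∈ Icc (0 : ℝ) 1) :
    expLoss x (w + s • v) ≤ max (expLoss x w) (expLoss x (w + v)) := by
  have hconv : ConvexOn ℝ univ fun s : ℝ => expLoss x (w + s • v) :=
    convexOn_of_hasDerivWithinAt2_nonneg convex_univ
      (fun s _ => (hasDerivAt_expLoss_line x w v s).continuousAt.continuousWithinAt)
      (fun s _ => (hasDerivAt_expLoss_line x w v s).hasDerivWithinAt)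
      (fun s _ => (hasDerivAt_inner_expLossGrad_line x w v s).hasDerivWithinAt)
      (fun s _ => Finset.sum_nonneg fun n _ => by positivity)
  simpa using hconv.le_on_segment (mem_univ 0) (mem_univ 1) (by rwa [segment_eq_Icc zero_le_one])

lemma norm_expLossGrad_le (hx : ∀ n, ‖x n‖ ≤ 1) (w : EuclideanSpace ℝ (Fin d)) :
    ‖expLossGrad x w‖ ≤ expLoss x w := by
  rw [expLossGrad, norm_neg]
  refine (norm_sum_le _ _).trans (Finset.sum_le_sum fun n _ => ?_)
  rw [norm_smul, Real.norm_of_nonneg (Real.exp_pos _).le]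
  exact mul_le_of_le_one_right (Real.exp_pos _).le (hx n)

lemma expLoss_sub_smul_expLossGrad_le (hx : ∀ n, ‖x n‖ ≤ 1) {η : ℝ} (hη : 0 ≤ η)
    (w : EuclideanSpace ℝ (Fin d)) (hηL : η * expLoss x w < 1) :
    expLoss x (w - η • expLossGrad x w) ≤
      expLoss x w - η * (1 - η / 2 * expLoss x w) * ‖expLossGrad x w‖ ^ 2 := by
  set g := expLossGrad x w
  set v := -(η • g)
  set φ : ℝ → ℝ := fun s => expLoss x (w + s • v)
  have hφ0 : φ 0 = expLoss x w := by simp [φ]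
  have hφ1 : φ 1 = expLoss x (w - η • g) := by simp [φ, v, sub_eq_add_neg]
  have hslope : ⟪expLossGrad x (w + (0 : ℝ) • v), v⟫ = -(η * ‖g‖ ^ 2) := by
    rw [zero_smul, add_zero, inner_neg_right, real_inner_smul_right, real_inner_self_eq_norm_sq]
  have hv : ‖v‖ ^ 2 = η ^ 2 * ‖g‖ ^ 2 := by
    rw [norm_neg, norm_smul, Real.norm_of_nonneg hη, mul_pow]
  have hcurv : ∀ s ∈ Icc (0 : ℝ) 1, ∑ n, Real.exp (-⟪w + s • v, x n⟫) * ⟪x n, v⟫ ^ 2 ≤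
      η ^ 2 * ‖g‖ ^ 2 * max (φ 0) (φ 1) := fun s hs => by
    rw [← hv]
    refine (sum_exp_mul_inner_sq_le x hx _ v).trans (mul_le_mul_of_nonneg_left ?_ (sq_nonneg _))
    simpa [φ] using expLoss_line_le_max x w v hs
  have htaylor := le_add_deriv_mul_add_of_deriv2_le zero_le_one
    (fun s _ => hasDerivAt_expLoss_line x w v s)
    (fun s _ => hasDerivAt_inner_expLossGrad_line x w v s) hcurv
  rw [hslope, hφ0, hφ1] at htaylor
  refine le_sub_mul_of_le_add_max hη hηL (expLoss_nonneg x w) (sq_nonneg _) ?_ (by linarith)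
  exact pow_le_pow_left₀ (norm_nonneg _) (norm_expLossGrad_le x hx w) 2

lemma expLoss_gradientDescent_decrease (hx : ∀ n, ‖x n‖ ≤ 1) {η : ℝ} (hη : 0 ≤ η)
    {w : ℕ → EuclideanSpace ℝ (Fin d)} (hηL : η * expLoss x (w 0) < 1)
    (hGD : ∀ t : ℕ, w (t + 1) = w t - η • expLossGrad x (w t)) (t : ℕ) :
    η * (1 - η / 2 * expLoss x (w 0)) * ‖expLossGrad x (w t)‖ ^ 2 ≤
      expLoss x (w t) - expLoss x (w (t + 1)) := by
  set L₀ := expLoss x (w 0)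
  have hstep : ∀ t, expLoss x (w t) ≤ L₀ → η * (1 - η / 2 * L₀) * ‖expLossGrad x (w t)‖ ^ 2 ≤
      expLoss x (w t) - expLoss x (w (t + 1)) := fun t ht => by
    have hdesc := expLoss_sub_smul_expLossGrad_le x hx hη (w t)
      ((mul_le_mul_of_nonneg_left ht hη).trans_lt hηL)
    rw [← hGD] at hdesc
    calc η * (1 - η / 2 * L₀) * ‖expLossGrad x (w t)‖ ^ 2
        ≤ η * (1 - η / 2 * expLoss x (w t)) * ‖expLossGrad x (w t)‖ ^ 2 := by gcongr
      _ ≤ expLoss x (w t) - expLoss x (w (t + 1)) := by linarith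
  have hc : 0 ≤ η * (1 - η / 2 * L₀) := mul_nonneg hη (by nlinarith [expLoss_nonneg x (w 0)])
  have hbounded : ∀ t, expLoss x (w t) ≤ L₀ := fun t => by
    induction t with
    | zero => rfl
    | succ t ih => nlinarith [hstep t ih, sq_nonneg ‖expLossGrad x (w t)‖]
  exact hstep t (hbounded t)

end ExpLoss

theorem gd_expLoss_grad_sq_summable_general
    {d N : ℕ} (x : Fin N → EuclideanSpace ℝ (Fin d))
    (hx : ∀ n, ‖x n‖ ≤ 1)
    (η : ℝ) (w : ℕ → EuclideanSpace ℝ (Fin d))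
    (hη : 0 < η) (hη' : η < 1 / expLoss x (w 0))
    (hGD : ∀ t : ℕ, w (t + 1) = w t - η • expLossGrad x (w t)) :
    (∀ t : ℕ, ∑ i ∈ Finset.range (t + 1), ‖expLossGrad x (w i)‖ ^ 2 ≤
        (expLoss x (w 0) - expLoss x (w (t + 1))) /
          (η * (1 - η / 2 * expLoss x (w 0)))) ∧
    Summable (fun i : ℕ => ‖expLossGrad x (w i)‖ ^ 2) ∧
    ∑' i : ℕ, ‖expLossGrad x (w i)‖ ^ 2 ≤
      expLoss x (w 0) / (η * (1 - η / 2 * expLoss x (w 0))) := by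
  set L₀ := expLoss x (w 0)
  have hηL₀ : η * L₀ < 1 := by
    rcases (expLoss_nonneg x (w 0)).eq_or_lt with h | h
    · simp [L₀, ← h]
    · exact (lt_div_iff₀ h).1 hη'
  have hc : 0 < η * (1 - η / 2 * L₀) := mul_pos hη (by nlinarith)
  have hpartial := sum_range_le_div_of_mul_le_sub hc
    (expLoss_gradientDescent_decrease x hx hη.le hηL₀ hGD)
  have hbound : ∀ n, ∑ i ∈ Finset.range n, ‖expLossGrad x (w i)‖ ^ 2 ≤
      L₀ / (η * (1 - η / 2 * L₀)) := fun n =>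
    (hpartial n).trans (div_le_div_of_nonneg_right (by linarith [expLoss_nonneg x (w n)]) hc.le)
  exact ⟨fun t => hpartial (t + 1), summable_of_sum_range_le (fun _ => sq_nonneg _) hbound,
    Real.tsum_le_of_sum_range_le (fun _ => sq_nonneg _) hbound⟩

/-- Summability of squared gradient norms under gradient descent on the exponential loss:
partial sums are bounded by `(L(w(0)) − L(w(t+1))) / (η(1 − (η/2)L(w(0))))`, hence the
series converges and its sum is at most `L(w(0)) / (η(1 − (η/2)L(w(0))))`. -/
theorem gd_expLoss_grad_sq_summable
    {d N : ℕ} (x : Fin N → EuclideanSpace ℝ (Fin d))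
    (hx : ∀ n, ‖x n‖ ≤ 1)
    (hsep : ∃ wstar : EuclideanSpace ℝ (Fin d), ∀ n, 0 < ⟪wstar, x n⟫)
    (η : ℝ) (w : ℕ → EuclideanSpace ℝ (Fin d))
    (hη : 0 < η) (hη' : η < 1 / expLoss x (w 0))
    (hGD : ∀ t : ℕ, w (t + 1) = w t - η • expLossGrad x (w t)) :
    (∀ t : ℕ, ∑ i ∈ Finset.range (t + 1), ‖expLossGrad x (w i)‖ ^ 2 ≤
        (expLoss x (w 0) - expLoss x (w (t + 1))) /
          (η * (1 - η / 2 * expLoss x (w 0)))) ∧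
    Summable (fun i : ℕ => ‖expLossGrad x (w i)‖ ^ 2) ∧
    ∑' i : ℕ, ‖expLossGrad x (w i)‖ ^ 2 ≤
      expLoss x (w 0) / (η * (1 - η / 2 * expLoss x (w 0))) :=
  gd_expLoss_grad_sq_summable_general x hx η w hη hη' hGD
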